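/- For every natural number n, det st(n) = det w(n), where st(n) is the n×n skew-symmetric-type matrix with entries a_{00} = 1, a_{ii} = 0 for i > 0, a_{ij} = Σ_{s=2i−j+1}^{2j−i} C(i+j, s) for i < j, and a_{ij} = −a_{ji} for i > j; and w(n) is the n×n matrix with (i,j)-entry C(i+j+1, 2i−j) + C(i+j, 2i−j−1). -/

import Mathlib

/-- Extended binomial coefficient: `C a b = 0` when `b < 0` or `b > a`. -/
def C (a b : ℤ) : ℤ := if 0 ≤ b ∧ b ≤ a then (a.toNat).choose b.toNat else 0

/-- The matrix `st(n)` with integer entries. -/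
noncomputable def st (n : ℕ) : Matrix (Fin n) (Fin n) ℤ :=
  fun i j =>
    if i = j then (if (i : ℕ) = 0 then 1 else 0)
    else if (i : ℕ) < j then
      ∑ s ∈ Finset.Icc (2*(i : ℤ) - j + 1) (2*(j : ℤ) - i), C ((i : ℤ) + j) s
    else
      -(∑ s ∈ Finset.Icc (2*(j : ℤ) - i + 1) (2*(i : ℤ) - j), C ((j : ℤ) + i) s)

/-- The matrix `w(n)` with integer entries. -/
def w (n : ℕ) : Matrix (Fin n) (Fin n) ℤ :=
  fun i j => C ((i : ℤ) + j + 1) (2*(i : ℤ) - j) + C ((i : ℤ) + j) (2*(i : ℤ) - j - 1)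

/-!
Let `G_N(x) = ∑_{s ≤ x} C(N, s)`. The interval sums defining `st` telescope, so
`st = S + E₀₀` with `S i j = G_{i+j}(2j - i) - G_{i+j}(2i - j)` skew-symmetric. Pascal's rule and
the symmetry `C(N, s) = C(N, N - s)` give `w (i+1) j = 2 S i j - S (i+1) j`, and the first row of
`w` is `e₀`. Subtracting twice each row of `st` from the next one, and then twice each column from
the next one, keeps the determinant, clears the first row and leaves a minor `P`. By skew-symmetry
of `S`, `Pᵀ` arises from the minor of `w` on rows and columns `≥ 1` by column operations of the same
kind, so the two determinants agree.
-/

theorem C_of_neg {a b : ℤ} (hb : b < 0) : C a b = 0 := by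
  simp [C, hb.not_ge]

theorem C_natCast (N k : ℕ) : C N k = N.choose k := by
  unfold C
  split_ifs with h
  · simp
  · rw [Nat.choose_eq_zero_of_lt (by omega), Nat.cast_zero]

theorem C_of_lt {a b : ℤ} (ha : 0 ≤ a) (h : a < b) : C a b = 0 := by
  lift a to ℕ using ha
  lift b to ℕ using by omega
  rw [C_natCast, Nat.choose_eq_zero_of_lt (by omega), Nat.cast_zero]

theorem C_add_one {a : ℤ} (ha : 0 ≤ a) (b : ℤ) : C (a + 1) b = C a b + C a (b - 1) := by
  lift a to ℕ using ha
  rcases lt_trichotomy b 0 with hb | rfl | hb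
  · rw [C_of_neg hb, C_of_neg hb, C_of_neg (by omega), add_zero]
  · rw [C_of_neg (by omega : (0 : ℤ) - 1 < 0), add_zero, ← Nat.cast_succ, ← Nat.cast_zero,
      C_natCast, C_natCast]
    simp
  · obtain ⟨k, rfl⟩ : ∃ k : ℕ, b = k + 1 := ⟨b.toNat - 1, by omega⟩
    rw [add_sub_cancel_right, ← Nat.cast_succ, ← Nat.cast_succ, C_natCast, C_natCast, C_natCast,
      Nat.choose_succ_succ', Nat.cast_add, add_comm]

theorem C_symm {a : ℤ} (ha : 0 ≤ a) (b : ℤ) : C a (a - b) = C a b := by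
  lift a to ℕ using ha
  rcases lt_or_ge b 0 with hb | hb
  · rw [C_of_neg hb, C_of_lt (by omega) (by omega)]
  lift b to ℕ using hb
  rcases le_or_gt b a with hba | hba
  · rw [← Nat.cast_sub hba, C_natCast, C_natCast, Nat.choose_symm hba]
  · rw [C_of_neg (by omega), C_of_lt (by omega) (by omega)]

noncomputable def binomPartialSum (N x : ℤ) : ℤ := ∑ s ∈ Finset.Icc 0 x, C N s

theorem binomPartialSum_of_neg (N : ℤ) {x : ℤ} (hx : x < 0) : binomPartialSum N x = 0 := by
  rw [binomPartialSum, Finset.Icc_eq_empty_of_lt hx, Finset.sum_empty]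

theorem binomPartialSum_eq_pred_add (N x : ℤ) :
    binomPartialSum N x = binomPartialSum N (x - 1) + C N x := by
  rcases lt_or_ge x 0 with hx | hx
  · rw [binomPartialSum_of_neg N hx, binomPartialSum_of_neg N (by omega), C_of_neg hx, add_zero]
  · rw [binomPartialSum, binomPartialSum, ← Finset.insert_Icc_sub_one_right_eq_Icc hx,
      Finset.sum_insert (by simp), add_comm]

theorem sum_Icc_C_eq_sub (N : ℤ) {L U : ℤ} (h : L - 1 ≤ U) :
    ∑ s ∈ Finset.Icc L U, C N s = binomPartialSum N U - binomPartialSum N (L - 1) := by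
  induction U, h using Int.leInduction with
  | base => rw [Finset.Icc_eq_empty_of_lt (by omega), Finset.sum_empty, sub_self]
  | succ U hU ih =>
    rw [← Finset.insert_Icc_sub_one_right_eq_Icc (by omega), Finset.sum_insert (by simp),
      add_sub_cancel_right, ih, binomPartialSum_eq_pred_add N (U + 1), add_sub_cancel_right]
    ring

theorem binomPartialSum_add_one_left {N : ℤ} (hN : 0 ≤ N) (x : ℤ) :
    binomPartialSum (N + 1) x = binomPartialSum N x + binomPartialSum N (x - 1) := by
  rcases lt_or_ge x 0 with hx | hx
  · rw [binomPartialSum_of_neg _ hx, binomPartialSum_of_neg _ hx,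
      binomPartialSum_of_neg _ (by omega : x - 1 < 0), add_zero]
  induction x, hx using Int.leInduction with
  | base => simp [binomPartialSum, C_add_one hN, C_of_neg]
  | succ x hx ih =>
    have h1 := binomPartialSum_eq_pred_add (N + 1) (x + 1)
    have h2 := binomPartialSum_eq_pred_add N (x + 1)
    have h3 := binomPartialSum_eq_pred_add N x
    have pascal := C_add_one hN (x + 1)
    rw [add_sub_cancel_right] at h1 h2 pascal ⊢
    linear_combination h1 + ih + pascal - h2 - h3

theorem binomPartialSum_add_one_right_of_le {N : ℤ} (hN : 0 ≤ N) {x : ℤ} (hx : N ≤ x) :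
    binomPartialSum N (x + 1) = binomPartialSum N x := by
  rw [binomPartialSum_eq_pred_add, add_sub_cancel_right, C_of_lt hN (by omega), add_zero]

theorem binomPartialSum_add_one_two_mul {j : ℤ} (hj : 0 ≤ j) :
    binomPartialSum (j + 1) (2 * (j + 1)) = 2 * binomPartialSum j (2 * j) := by
  rw [binomPartialSum_add_one_left hj, show 2 * (j + 1) = 2 * j + 1 + 1 by ring,
    add_sub_cancel_right, binomPartialSum_add_one_right_of_le hj (by omega),
    binomPartialSum_add_one_right_of_le hj (by omega)]
  ring

noncomputable def stSkew (i j : ℤ) : ℤ :=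
  binomPartialSum (i + j) (2 * j - i) - binomPartialSum (i + j) (2 * i - j)

theorem stSkew_swap (i j : ℤ) : stSkew j i = -stSkew i j := by
  rw [stSkew, stSkew, add_comm j i, neg_sub]

theorem st_apply {n : ℕ} (i j : Fin n) :
    st n i j = stSkew i j + if (i : ℕ) = 0 ∧ (j : ℕ) = 0 then 1 else 0 := by
  simp only [st, stSkew]
  rcases lt_trichotomy (i : ℕ) j with h | h | h
  · rw [if_neg (Fin.ne_of_lt h), if_pos h, if_neg (by omega), sum_Icc_C_eq_sub _ (by omega),
      add_sub_cancel_right, add_zero]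
  · rw [if_pos (Fin.ext h), h, sub_self, zero_add]
    simp
  · rw [if_neg (Fin.ne_of_gt h), if_neg (by omega), if_neg (by omega),
      sum_Icc_C_eq_sub _ (by omega), add_sub_cancel_right, add_zero, add_comm (j : ℤ), neg_sub]

theorem st_zero_zero (m : ℕ) : st (m + 1) 0 0 = 1 := by
  simp [st]

theorem st_zero_apply {m : ℕ} (j : Fin (m + 1)) : st (m + 1) 0 j = binomPartialSum j (2 * j) := by
  simp only [st_apply, stSkew, Fin.val_zero, Nat.cast_zero, zero_add, mul_zero, sub_zero,
    zero_sub, true_and]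
  rcases Nat.eq_zero_or_pos j with hj | hj
  · simp [hj, binomPartialSum, C]
  · rw [if_neg hj.ne', binomPartialSum_of_neg _ (show -((j : ℕ) : ℤ) < 0 by omega), add_zero,
      sub_zero]

theorem st_zero_succ {m : ℕ} (j : Fin m) :
    st (m + 1) 0 j.succ = 2 * st (m + 1) 0 j.castSucc := by
  rw [st_zero_apply, st_zero_apply, Fin.val_succ, Fin.val_castSucc, Nat.cast_succ,
    binomPartialSum_add_one_two_mul (by positivity)]

-- Both sides reduce by Pascal's rule to `C (i + j)` at `2i - j`, `2i - j + 1`, `2i - j + 2`;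
-- the terms at the upper ends `2j - i`, `2j - i - 1` are matched by symmetry.
theorem two_mul_stSkew_sub_stSkew_add_one {i j : ℤ} (h : 0 ≤ i + j) :
    2 * stSkew i j - stSkew (i + 1) j
      = C (i + 1 + j + 1) (2 * (i + 1) - j) + C (i + 1 + j) (2 * (i + 1) - j - 1) := by
  rw [stSkew, stSkew, show i + 1 + j = i + j + 1 by ring, binomPartialSum_add_one_left h,
    binomPartialSum_add_one_left h, C_add_one (by omega), C_add_one h, C_add_one h]
  have symm := C_symm h (2 * j - i)
  have symm' := C_symm h (2 * j - i - 1)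
  have d1 := binomPartialSum_eq_pred_add (i + j) (2 * j - i)
  have d2 := binomPartialSum_eq_pred_add (i + j) (2 * j - i - 1)
  have d3 := binomPartialSum_eq_pred_add (i + j) (2 * (i + 1) - j)
  have d4 := binomPartialSum_eq_pred_add (i + j) (2 * (i + 1) - j - 1)
  ring_nf at *
  linarith

theorem w_zero_apply {m : ℕ} (j : Fin (m + 1)) : w (m + 1) 0 j = if j = 0 then 1 else 0 := by
  rcases Fin.eq_zero_or_eq_succ j with rfl | ⟨j, rfl⟩
  · simp [w, C]
  · rw [if_neg (Fin.succ_ne_zero j), w, C_of_neg (by push_cast [Fin.val_succ, Fin.val_zero]; omega),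
      C_of_neg (by push_cast [Fin.val_succ, Fin.val_zero]; omega)]
    simp

theorem w_succ_apply {m : ℕ} (i : Fin m) (j : Fin (m + 1)) :
    w (m + 1) i.succ j = 2 * stSkew i.castSucc j - stSkew i.succ j := by
  rw [w, Fin.val_succ, Fin.val_castSucc, Nat.cast_succ,
    two_mul_stSkew_sub_stSkew_add_one (by positivity)]

namespace Matrix

variable {R : Type*} [CommRing R] {m : ℕ}

theorem det_eq_mul_det_submatrix_succ_of_row_zero (X : Matrix (Fin (m + 1)) (Fin (m + 1)) R)
    (h : ∀ j : Fin m, X 0 j.succ = 0) : X.det = X 0 0 * (X.submatrix Fin.succ Fin.succ).det := by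
  simp [det_succ_row_zero, Fin.sum_univ_succ, h]

/-- The minor on rows and columns `1, …, m` after adding `c` times each row to the next one and
then `c` times each column to the next one. -/
def diffMinor (c : R) (X : Matrix (Fin (m + 1)) (Fin (m + 1)) R) : Matrix (Fin m) (Fin m) R :=
  of fun i j => X i.succ j.succ + c * X i.castSucc j.succ + c * X i.succ j.castSucc
    + c ^ 2 * X i.castSucc j.castSucc

theorem det_eq_mul_det_diffMinor (c : R) (X : Matrix (Fin (m + 1)) (Fin (m + 1)) R)
    (h : ∀ j : Fin m, X 0 j.succ + c * X 0 j.castSucc = 0) :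
    X.det = X 0 0 * (X.diffMinor c).det := by
  let Y : Matrix (Fin (m + 1)) (Fin (m + 1)) R :=
    of fun i j => Fin.cases (X 0 j) (fun i => X i.succ j + c * X i.castSucc j) i
  let Z : Matrix (Fin (m + 1)) (Fin (m + 1)) R :=
    of fun i j => Fin.cases (Y i 0) (fun j => Y i j.succ + c * Y i j.castSucc) j
  have hXY : X.det = Y.det :=
    det_eq_of_forall_row_eq_smul_add_pred (fun _ => -c) (fun _ => rfl) (fun i j => by simp [Y])
  have hYZ : Y.det = Z.det :=
    det_eq_of_forall_col_eq_smul_add_pred (fun _ => -c) (fun _ => rfl) (fun i j => by simp [Z])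
  rw [hXY, hYZ, Z.det_eq_mul_det_submatrix_succ_of_row_zero (fun j => by simpa [Z, Y] using h j)]
  congr 2
  ext i j
  simp only [Z, Y, diffMinor, submatrix_apply, of_apply, Fin.cases_succ]
  ring

end Matrix

theorem det_diffMinor_st_eq_det_submatrix_w (m : ℕ) :
    ((st (m + 1)).diffMinor (-2)).det = ((w (m + 1)).submatrix Fin.succ Fin.succ).det := by
  cases m with
  | zero => simp
  | succ k =>
    rw [← Matrix.det_transpose]
    refine (Matrix.det_eq_of_forall_col_eq_smul_add_pred (fun _ => 2) (fun i => ?_)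
      (fun i j => ?_)).symm
    · have row := st_zero_succ i
      simp only [Matrix.transpose_apply, Matrix.submatrix_apply, Matrix.diffMinor,
        Matrix.of_apply, st_apply, w_succ_apply, Fin.val_succ, Fin.val_castSucc,
        Fin.val_zero] at row ⊢
      push_cast [false_and, and_false, true_and, if_false, add_zero] at row ⊢
      linarith [stSkew_swap 1 (i : ℤ), stSkew_swap 1 ((i : ℤ) + 1)]
    · simp only [Matrix.transpose_apply, Matrix.submatrix_apply, Matrix.diffMinor,
        Matrix.of_apply, st_apply, w_succ_apply, Fin.val_succ, Fin.val_castSucc]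
      push_cast [false_and, if_false, add_zero]
      linarith [stSkew_swap ((i : ℤ) + 1) ((j : ℤ) + 1 + 1),
        stSkew_swap ((i : ℤ) + 1) ((j : ℤ) + 1), stSkew_swap (i : ℤ) ((j : ℤ) + 1 + 1),
        stSkew_swap (i : ℤ) ((j : ℤ) + 1)]

theorem det_st_eq_det_w (n : ℕ) : (st n).det = (w n).det := by
  cases n with
  | zero => simp
  | succ m =>
    have hst := (st (m + 1)).det_eq_mul_det_diffMinor (-2) (fun j => by rw [st_zero_succ]; ring)
    have hw := (w (m + 1)).det_eq_mul_det_submatrix_succ_of_row_zero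
      (fun j => by rw [w_zero_apply, if_neg (Fin.succ_ne_zero j)])
    rw [hst, hw, st_zero_zero, w_zero_apply, if_pos rfl, det_diffMinor_st_eq_det_submatrix_w]
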